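/- arXiv:1601.06485 — 2 statements merged into one kernel-verified Lean document; each statement's English description precedes it below -/
import Mathlib

section
/- The function C_1*(x,t) defined by the paper's formula satisfies the ODE ∂C_1*/∂t = k_a C_1 - (k_d + k_i) C_1* with initial condition C_1*(x,0) = 0. -/
open Real

/-- The paper's `C₁*(x, t)` is `E₂ k_a cos (b x) / ((λ - n₁) (λ - n₂)) * boundProfile λ n₁ n₂ t`
with `λ = k_d + k_i`. -/
noncomputable def boundProfile (lam n₁ n₂ t : ℝ) : ℝ :=
  (lam - n₂) * exp (-n₁ * t) - (lam - n₁) * exp (-n₂ * t) + (n₂ - n₁) * exp (-lam * t)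

theorem hasDerivAt_exp_const_mul (c t : ℝ) :
    HasDerivAt (fun τ => exp (c * τ)) (c * exp (c * t)) t := by
  simpa only [one_mul, mul_comm c] using ((hasDerivAt_id' t).const_mul c).exp

theorem hasDerivAt_boundProfile (lam n₁ n₂ t : ℝ) :
    HasDerivAt (boundProfile lam n₁ n₂)
      ((lam - n₁) * (lam - n₂) * (exp (-n₁ * t) - exp (-n₂ * t))
        - lam * boundProfile lam n₁ n₂ t) t := by
  have h := (((hasDerivAt_exp_const_mul (-n₁) t).const_mul (lam - n₂)).sub
    ((hasDerivAt_exp_const_mul (-n₂) t).const_mul (lam - n₁))).add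
    ((hasDerivAt_exp_const_mul (-lam) t).const_mul (n₂ - n₁))
  exact h.congr_deriv (by unfold boundProfile; ring)

theorem boundProfile_zero (lam n₁ n₂ : ℝ) : boundProfile lam n₁ n₂ 0 = 0 := by
  simp only [boundProfile, mul_zero, exp_zero]
  ring

theorem C1star_satisfies_ODE_general (k_a k_d k_i E₂ b n₁ n₂ : ℝ)
    (hn₁ : n₁ ≠ k_d + k_i) (hn₂ : n₂ ≠ k_d + k_i)
    (C₁ C₁s : ℝ → ℝ → ℝ)
    (hC₁ : ∀ x t, C₁ x t = E₂ * (Real.exp (-n₁ * t) - Real.exp (-n₂ * t)) * Real.cos (b * x))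
    (hC₁s : ∀ x t, C₁s x t = E₂ * k_a * Real.cos (b * x) /
        ((k_d + k_i - n₁) * (k_d + k_i - n₂)) *
        ((k_d + k_i - n₂) * Real.exp (-n₁ * t) - (k_d + k_i - n₁) * Real.exp (-n₂ * t) +
          (n₂ - n₁) * Real.exp (-(k_d + k_i) * t))) :
    (∀ x t : ℝ,
      deriv (fun τ => C₁s x τ) t = k_a * C₁ x t - (k_d + k_i) * C₁s x t) ∧
    ∀ x : ℝ, C₁s x 0 = 0 := by
  set lam := k_d + k_i
  have hC₁s' : ∀ x t, C₁s x t =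
      E₂ * k_a * cos (b * x) / ((lam - n₁) * (lam - n₂)) * boundProfile lam n₁ n₂ t :=
    hC₁s
  refine ⟨fun x t => ?_, fun x => by rw [hC₁s', boundProfile_zero, mul_zero]⟩
  have h₁ : lam - n₁ ≠ 0 := sub_ne_zero.mpr hn₁.symm
  have h₂ : lam - n₂ ≠ 0 := sub_ne_zero.mpr hn₂.symm
  rw [show (fun τ => C₁s x τ) = _ from funext (hC₁s' x),
    ((hasDerivAt_boundProfile lam n₁ n₂ t).const_mul _).deriv, hC₁, hC₁s']
  field_simp

theorem C1star_satisfies_ODE (k_a k_d k_i E₂ b n₁ n₂ : ℝ)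
    (hne : n₁ ≠ n₂) (hn₁ : n₁ ≠ k_d + k_i) (hn₂ : n₂ ≠ k_d + k_i)
    (C₁ C₁s : ℝ → ℝ → ℝ)
    (hC₁ : ∀ x t, C₁ x t = E₂ * (Real.exp (-n₁ * t) - Real.exp (-n₂ * t)) * Real.cos (b * x))
    (hC₁s : ∀ x t, C₁s x t = E₂ * k_a * Real.cos (b * x) /
        ((k_d + k_i - n₁) * (k_d + k_i - n₂)) *
        ((k_d + k_i - n₂) * Real.exp (-n₁ * t) - (k_d + k_i - n₁) * Real.exp (-n₂ * t) +
          (n₂ - n₁) * Real.exp (-(k_d + k_i) * t))) :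
    (∀ x t : ℝ,
      deriv (fun τ => C₁s x τ) t = k_a * C₁ x t - (k_d + k_i) * C₁s x t) ∧
    ∀ x : ℝ, C₁s x 0 = 0 :=
  C1star_satisfies_ODE_general k_a k_d k_i E₂ b n₁ n₂ hn₁ hn₂ C₁ C₁s hC₁ hC₁s
end

section
/- The function C_i(x,t) defined by the paper's formula satisfies ∂C_i/∂t = k_i C_1* - k_{id} C_i with C_i(x,0) = 0, provided k_{id} ∉ {n_1, n_2, k_d + k_i}. -/
open Real

/-- The solution of `y' = c e^{-n t} - k y`, `y 0 = 0`, for a decay rate `k ≠ n`. -/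
noncomputable def expResponse (c k n t : ℝ) : ℝ :=
  c / (k - n) * (exp (-n * t) - exp (-k * t))

theorem expResponse_zero (c k n : ℝ) : expResponse c k n 0 = 0 := by
  simp [expResponse]

theorem hasDerivAt_expResponse {k n : ℝ} (h : k ≠ n) (c t : ℝ) :
    HasDerivAt (expResponse c k n) (c * exp (-n * t) - k * expResponse c k n t) t := by
  have hexp (r : ℝ) : HasDerivAt (fun τ => exp (r * τ)) (exp (r * t) * r) t :=
    ((hasDerivAt_id t).const_mul r).exp.congr_deriv (by simp)
  refine (((hexp (-n)).sub (hexp (-k))).const_mul (c / (k - n))).congr_deriv ?_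
  have hkn : k - n ≠ 0 := sub_ne_zero.mpr h
  simp only [expResponse]
  field_simp
  ring

theorem Ci_satisfies_ODE_general (k_a k_d k_i k_id E₂ b n₁ n₂ : ℝ)
    (hid₁ : k_id ≠ n₁) (hid₂ : k_id ≠ n₂) (hid₃ : k_id ≠ k_d + k_i)
    (C₁s Cᵢ : ℝ → ℝ → ℝ)
    (hC₁s : ∀ x t, C₁s x t = E₂ * k_a * Real.cos (b * x) /
        ((k_d + k_i - n₁) * (k_d + k_i - n₂)) *
        ((k_d + k_i - n₂) * Real.exp (-n₁ * t) - (k_d + k_i - n₁) * Real.exp (-n₂ * t) +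
          (n₂ - n₁) * Real.exp (-(k_d + k_i) * t)))
    (hCᵢ : ∀ x t, Cᵢ x t = E₂ * k_a * k_i * Real.cos (b * x) /
        ((k_d + k_i - n₁) * (k_d + k_i - n₂)) *
        ((k_d + k_i - n₂) / (k_id - n₁) * (Real.exp (-n₁ * t) - Real.exp (-k_id * t)) -
          (k_d + k_i - n₁) / (k_id - n₂) * (Real.exp (-n₂ * t) - Real.exp (-k_id * t)) +
          (n₂ - n₁) / (k_id - k_d - k_i) *
            (Real.exp (-(k_d + k_i) * t) - Real.exp (-k_id * t)))) :
    (∀ x t : ℝ,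
      deriv (fun τ => Cᵢ x τ) t = k_i * C₁s x t - k_id * Cᵢ x t) ∧
    ∀ x : ℝ, Cᵢ x 0 = 0 := by
  have hCᵢ_eq (x : ℝ) : (fun τ => Cᵢ x τ) = fun τ =>
      E₂ * k_a * k_i * cos (b * x) / ((k_d + k_i - n₁) * (k_d + k_i - n₂)) *
        (expResponse (k_d + k_i - n₂) k_id n₁ τ - expResponse (k_d + k_i - n₁) k_id n₂ τ +
          expResponse (n₂ - n₁) k_id (k_d + k_i) τ) := by
    funext τ
    rw [hCᵢ, expResponse, expResponse, expResponse, sub_sub k_id]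
  refine ⟨fun x t => ?_, fun x => ?_⟩
  · rw [hCᵢ_eq]
    refine ((((hasDerivAt_expResponse hid₁ _ t).sub (hasDerivAt_expResponse hid₂ _ t)).add
      (hasDerivAt_expResponse hid₃ _ t)).const_mul _).deriv.trans ?_
    rw [hC₁s, hCᵢ]
    simp only [expResponse]
    ring
  · simp [congrFun (hCᵢ_eq x) 0, expResponse_zero]

theorem Ci_satisfies_ODE (k_a k_d k_i k_id E₂ b n₁ n₂ : ℝ)
    (hne : n₁ ≠ n₂) (hn₁ : n₁ ≠ k_d + k_i) (hn₂ : n₂ ≠ k_d + k_i)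
    (hid₁ : k_id ≠ n₁) (hid₂ : k_id ≠ n₂) (hid₃ : k_id ≠ k_d + k_i)
    (C₁s Cᵢ : ℝ → ℝ → ℝ)
    (hC₁s : ∀ x t, C₁s x t = E₂ * k_a * Real.cos (b * x) /
        ((k_d + k_i - n₁) * (k_d + k_i - n₂)) *
        ((k_d + k_i - n₂) * Real.exp (-n₁ * t) - (k_d + k_i - n₁) * Real.exp (-n₂ * t) +
          (n₂ - n₁) * Real.exp (-(k_d + k_i) * t)))
    (hCᵢ : ∀ x t, Cᵢ x t = E₂ * k_a * k_i * Real.cos (b * x) /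
        ((k_d + k_i - n₁) * (k_d + k_i - n₂)) *
        ((k_d + k_i - n₂) / (k_id - n₁) * (Real.exp (-n₁ * t) - Real.exp (-k_id * t)) -
          (k_d + k_i - n₁) / (k_id - n₂) * (Real.exp (-n₂ * t) - Real.exp (-k_id * t)) +
          (n₂ - n₁) / (k_id - k_d - k_i) *
            (Real.exp (-(k_d + k_i) * t) - Real.exp (-k_id * t)))) :
    (∀ x t : ℝ,
      deriv (fun τ => Cᵢ x τ) t = k_i * C₁s x t - k_id * Cᵢ x t) ∧
    ∀ x : ℝ, Cᵢ x 0 = 0 :=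
  Ci_satisfies_ODE_general k_a k_d k_i k_id E₂ b n₁ n₂ hid₁ hid₂ hid₃ C₁s Cᵢ hC₁s hCᵢ
end
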